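/- arXiv:1706.01168 — 3 statements merged into one kernel-verified Lean document; each statement's English description precedes it below -/
import Mathlib

section
/- Let $(P_1,\dots,P_n)$ and $(Q_1,\dots,Q_n)$ be tuples of probability measures. If $P_1,\dots,P_n$ are mutually singular and $(P_1,\dots,P_n)\prec_h(Q_1,\dots,Q_n)$, then $Q_1,\dots,Q_n$ are also mutually singular. -/
/-!
Let `ν` be the average of `μ₁, …, μₙ`. The densities `dμᵢ/dν` are nonnegative and sum to `n`
`ν`-a.e., so their maximum is at most `n`, with equality a.e. exactly when at most one density is
nonzero at almost every point, i.e. when the `μᵢ` are mutually singular. The maximum of the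
coordinates is convex, so the heterogeneity order gives
`n = ∫ maxᵢ dPᵢ/dP dP ≤ ∫ maxᵢ dQᵢ/dQ dQ ≤ n`, which forces `maxᵢ dQᵢ/dQ = n` `Q`-a.e.
-/

open MeasureTheory Finset
open scoped ENNReal

theorem ConvexOn.finset_sup' {𝕜 E β ι : Type*} [Semiring 𝕜] [PartialOrder 𝕜] [AddCommMonoid E]
    [AddCommMonoid β] [LinearOrder β] [IsOrderedAddMonoid β] [SMul 𝕜 E] [Module 𝕜 β]
    [PosSMulStrictMono 𝕜 β] {t : Set E} {s : Finset ι} (hs : s.Nonempty) {f : ι → E → β}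
    (hf : ∀ i ∈ s, ConvexOn 𝕜 t (f i)) : ConvexOn 𝕜 t fun x => s.sup' hs fun i => f i x := by
  induction hs using Finset.Nonempty.cons_induction with
  | singleton i => simpa using hf i (mem_singleton_self i)
  | cons i s hi hs ih =>
    simp only [sup'_cons hs]
    exact (hf i (mem_cons_self i s)).sup (ih fun j hj => hf j (mem_cons_of_mem hj))

section FinsetSup

variable {ι M : Type*} [Fintype ι] [Nonempty ι] [AddCommMonoid M] [LinearOrder M]

theorem Finset.sup'_univ_le_sum [IsOrderedAddMonoid M] {x : ι → M} (hx : 0 ≤ x) :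
    univ.sup' univ_nonempty x ≤ ∑ i, x i :=
  sup'_le _ _ fun i _ => single_le_sum (fun j _ => hx j) (mem_univ i)

theorem Finset.sup'_univ_eq_sum_iff [IsOrderedCancelAddMonoid M] {x : ι → M} (hx : 0 ≤ x) :
    univ.sup' univ_nonempty x = ∑ i, x i ↔ Pairwise fun i j => x i = 0 ∨ x j = 0 := by
  classical
  obtain ⟨k, -, hk⟩ := exists_mem_eq_sup' univ_nonempty x
  rw [hk, ← add_sum_erase _ _ (mem_univ k), left_eq_add,
    sum_eq_zero_iff_of_nonneg fun j _ => hx j]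
  simp only [mem_erase, mem_univ, and_true]
  constructor
  · intro h i j hij
    rcases eq_or_ne i k with rfl | hik
    · exact .inr (h j hij.symm)
    · exact .inl (h i hik)
  · intro h j hjk
    refine (h hjk).elim id fun hk0 => le_antisymm ?_ (hx j)
    exact hk ▸ le_sup' x (mem_univ j) |>.trans_eq hk0

end FinsetSup

namespace MeasureTheory.Measure

variable {Ω : Type*} [MeasurableSpace Ω]

theorem mutuallySingular_iff_ae_rnDeriv_eq_zero_or {μ₁ μ₂ ν : Measure Ω}
    [μ₁.HaveLebesgueDecomposition ν] [μ₂.HaveLebesgueDecomposition ν]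
    (h₁ : μ₁ ≪ ν) (h₂ : μ₂ ≪ ν) :
    μ₁ ⟂ₘ μ₂ ↔ ∀ᵐ x ∂ν, μ₁.rnDeriv ν x = 0 ∨ μ₂.rnDeriv ν x = 0 := by
  have null_iff {μ : Measure Ω} [μ.HaveLebesgueDecomposition ν] (hμ : μ ≪ ν) {s : Set Ω}
      (hs : MeasurableSet s) : μ s = 0 ↔ ∀ᵐ x ∂ν, x ∈ s → μ.rnDeriv ν x = 0 := by
    rw [← setLIntegral_rnDeriv' hμ hs, setLIntegral_eq_zero_iff hs (measurable_rnDeriv μ ν)]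
  constructor
  · rintro ⟨t, ht, h₁t, h₂t⟩
    filter_upwards [(null_iff h₁ ht).mp h₁t, (null_iff h₂ ht.compl).mp h₂t] with x hx₁ hx₂
    by_cases hx : x ∈ t
    exacts [.inl (hx₁ hx), .inr (hx₂ hx)]
  · intro h
    have hs : MeasurableSet {x | μ₁.rnDeriv ν x = 0} :=
      measurable_rnDeriv μ₁ ν (measurableSet_singleton 0)
    refine ⟨_, hs, (null_iff h₁ hs).mpr (ae_of_all _ fun _ hx => hx), (null_iff h₂ hs.compl).mpr ?_⟩
    filter_upwards [h] with x hx hxs using hx.resolve_left hxs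

theorem rnDeriv_finset_sum {ι : Type*} (s : Finset ι) (μ : ι → Measure Ω) (ν : Measure Ω)
    [∀ i, IsFiniteMeasure (μ i)] [SigmaFinite ν] :
    (∑ i ∈ s, μ i).rnDeriv ν =ᵐ[ν] ∑ i ∈ s, (μ i).rnDeriv ν := by
  classical
  induction s using Finset.induction with
  | empty => simp
  | insert i s hi ih =>
    rw [sum_insert hi, sum_insert hi]
    exact (rnDeriv_add' _ _ ν).trans (ae_eq_refl _ |>.add ih)

variable {ι : Type*} [Fintype ι]

noncomputable def avg (μ : ι → Measure Ω) : Measure Ω :=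
  (Fintype.card ι : ℝ≥0∞)⁻¹ • ∑ i, μ i

noncomputable def maxRnDeriv [Nonempty ι] (μ : ι → Measure Ω) (ν : Measure Ω) (x : Ω) : ℝ :=
  univ.sup' univ_nonempty fun i => ((μ i).rnDeriv ν x).toReal

variable (μ : ι → Measure Ω)

theorem absolutelyContinuous_avg (i : ι) : μ i ≪ avg μ :=
  (absolutelyContinuous_of_le (single_le_sum (fun j _ => (μ j).zero_le) (mem_univ i))).trans
    (absolutelyContinuous_smul (by simp))

variable [Nonempty ι]

instance [∀ i, IsProbabilityMeasure (μ i)] : IsProbabilityMeasure (avg μ) := by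
  constructor
  simpa [avg] using ENNReal.inv_mul_cancel (by simp) (by simp)

instance [∀ i, IsFiniteMeasure (μ i)] : IsFiniteMeasure (avg μ) := by
  constructor
  simpa [avg] using ENNReal.mul_lt_top (by simp [Fintype.card_pos]) (by simp [measure_lt_top])

theorem smul_avg : (Fintype.card ι : ℝ≥0∞) • avg μ = ∑ i, μ i := by
  rw [avg, smul_smul, ENNReal.mul_inv_cancel (by simp) (by simp), one_smul]

theorem ae_sum_rnDeriv_avg [∀ i, IsFiniteMeasure (μ i)] :
    ∀ᵐ x ∂avg μ, ∑ i, ((μ i).rnDeriv (avg μ) x).toReal = Fintype.card ι := by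
  have hsum_ae := rnDeriv_finset_sum univ μ (avg μ)
  rw [← smul_avg] at hsum_ae
  filter_upwards [hsum_ae, rnDeriv_smul_left_of_ne_top' (avg μ) (avg μ) (ENNReal.natCast_ne_top _),
    rnDeriv_self (avg μ), ae_all_iff.mpr fun i => rnDeriv_lt_top (μ i) (avg μ)]
    with x hsum hsmul hself hfin
  rw [← ENNReal.toReal_sum fun i _ => (hfin i).ne, ← Finset.sum_apply, ← hsum, hsmul,
    Pi.smul_apply, hself]
  simp

theorem measurable_maxRnDeriv (ν : Measure Ω) : Measurable (maxRnDeriv μ ν) := by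
  unfold maxRnDeriv
  fun_prop

theorem integrable_maxRnDeriv [∀ i, IsFiniteMeasure (μ i)] (ν : Measure Ω) :
    Integrable (maxRnDeriv μ ν) ν := by
  refine (integrable_finsetSum univ fun i _ => integrable_toReal_rnDeriv (μ := μ i)).mono' ?_
    (ae_of_all _ fun x => ?_)
  · exact (measurable_maxRnDeriv μ ν).aestronglyMeasurable
  · have hnonneg : 0 ≤ fun i => ((μ i).rnDeriv ν x).toReal := fun i => ENNReal.toReal_nonneg
    rw [maxRnDeriv, Real.norm_of_nonneg (le_sup'_of_le _ (mem_univ (Classical.arbitrary ι))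
      (hnonneg (Classical.arbitrary ι)))]
    exact sup'_univ_le_sum hnonneg

theorem ae_maxRnDeriv_avg_le_card [∀ i, IsFiniteMeasure (μ i)] :
    ∀ᵐ x ∂avg μ, maxRnDeriv μ (avg μ) x ≤ Fintype.card ι := by
  filter_upwards [ae_sum_rnDeriv_avg μ] with x hx
  exact hx ▸ sup'_univ_le_sum fun i => ENNReal.toReal_nonneg

theorem pairwise_mutuallySingular_iff_ae_maxRnDeriv_avg_eq_card [∀ i, IsFiniteMeasure (μ i)] :
    (Pairwise fun i j => μ i ⟂ₘ μ j) ↔ ∀ᵐ x ∂avg μ, maxRnDeriv μ (avg μ) x = Fintype.card ι := by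
  have pointwise : ∀ᵐ x ∂avg μ, (Pairwise fun i j =>
      (μ i).rnDeriv (avg μ) x = 0 ∨ (μ j).rnDeriv (avg μ) x = 0) ↔
      maxRnDeriv μ (avg μ) x = Fintype.card ι := by
    filter_upwards [ae_sum_rnDeriv_avg μ, ae_all_iff.mpr fun i => rnDeriv_lt_top (μ i) (avg μ)]
      with x hsum hfin
    rw [maxRnDeriv, ← hsum, sup'_univ_eq_sum_iff fun i => ENNReal.toReal_nonneg]
    simp only [ENNReal.toReal_eq_zero_iff, fun i => (hfin i).ne, or_false]
  rw [← Filter.eventually_congr pointwise]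
  simp only [Pairwise, ae_all_iff, Filter.eventually_imp_distrib_left]
  exact forall₃_congr fun i j _ => mutuallySingular_iff_ae_rnDeriv_eq_zero_or
    (absolutelyContinuous_avg μ i) (absolutelyContinuous_avg μ j)

end MeasureTheory.Measure

theorem MeasureTheory.ae_eq_const_of_ae_le_of_le_integral {α : Type*} [MeasurableSpace α]
    {μ : Measure α} [IsProbabilityMeasure μ] {f : α → ℝ} {c : ℝ} (hf : Integrable f μ)
    (hle : ∀ᵐ x ∂μ, f x ≤ c) (hc : c ≤ ∫ x, f x ∂μ) : ∀ᵐ x ∂μ, f x = c :=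
  (integral_eq_iff_of_ae_le hf (integrable_const c) hle).mp <| le_antisymm
    (by simpa using integral_mono_ae hf (integrable_const c) hle) (by simpa using hc)

/-- Proposition 3.6 (v). If `P₁,…,Pₙ` are mutually singular and
`(P₁,…,Pₙ) ≺ₕ (Q₁,…,Qₙ)` (multivariate convex order between the vectors of Radon–Nikodym
derivatives with respect to the average measures `P = (1/n)∑ Pᵢ` and `Q = (1/n)∑ Qᵢ`),
then `Q₁,…,Qₙ` are mutually singular as well. -/
theorem het_order_preserves_mutual_singularity
    {Ω₁ Ω₂ : Type} [MeasurableSpace Ω₁] [MeasurableSpace Ω₂]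
    (n : ℕ) (hn : 0 < n)
    (P : Fin n → Measure Ω₁) (Q : Fin n → Measure Ω₂)
    [∀ i, IsProbabilityMeasure (P i)] [∀ i, IsProbabilityMeasure (Q i)]
    (hsing : Pairwise fun i j => P i ⟂ₘ P j)
    (hh : ∀ f : (Fin n → ℝ) → ℝ, ConvexOn ℝ Set.univ f →
      ∫ x, f (fun i =>
          ((P i).rnDeriv ((n : ℝ≥0∞)⁻¹ • ∑ j, P j) x).toReal) ∂((n : ℝ≥0∞)⁻¹ • ∑ j, P j) ≤
        ∫ ω, f (fun i =>
          ((Q i).rnDeriv ((n : ℝ≥0∞)⁻¹ • ∑ j, Q j) ω).toReal) ∂((n : ℝ≥0∞)⁻¹ • ∑ j, Q j)) :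
    Pairwise fun i j => Q i ⟂ₘ Q j := by
  have : NeZero n := ⟨hn.ne'⟩
  have avg_eq {Ω : Type} [MeasurableSpace Ω] (μ : Fin n → Measure Ω) :
      Measure.avg μ = (n : ℝ≥0∞)⁻¹ • ∑ j, μ j := by
    simp [Measure.avg]
  rw [← avg_eq P, ← avg_eq Q] at hh
  have hmax_conv : ConvexOn ℝ Set.univ fun y : Fin n → ℝ => univ.sup' univ_nonempty fun i => y i :=
    ConvexOn.finset_sup' _ fun i _ => (LinearMap.proj i).convexOn convex_univ
  have hP : ∀ᵐ x ∂Measure.avg P, Measure.maxRnDeriv P (Measure.avg P) x = n := by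
    simpa using (Measure.pairwise_mutuallySingular_iff_ae_maxRnDeriv_avg_eq_card P).mp hsing
  have hQ_le : ∀ᵐ ω ∂Measure.avg Q, Measure.maxRnDeriv Q (Measure.avg Q) ω ≤ n := by
    simpa using Measure.ae_maxRnDeriv_avg_le_card Q
  have hQ_ge : (n : ℝ) ≤ ∫ ω, Measure.maxRnDeriv Q (Measure.avg Q) ω ∂Measure.avg Q :=
    calc (n : ℝ) = ∫ x, Measure.maxRnDeriv P (Measure.avg P) x ∂Measure.avg P := by
          rw [integral_congr_ae hP]; simp
      _ ≤ _ := hh _ hmax_conv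
  have hQ := ae_eq_const_of_ae_le_of_le_integral (Measure.integrable_maxRnDeriv Q _) hQ_le hQ_ge
  exact (Measure.pairwise_mutuallySingular_iff_ae_maxRnDeriv_avg_eq_card Q).mpr (by simpa using hQ)
end

section
/- Let $(Q_1,\dots,Q_n)$ be probability measures on $(\Omega,\mathcal A)$. If there exists a probability measure $Q'$ dominating $(Q_1,\dots,Q_n)$ and a random variable $X$ with continuous (atomless) distribution under $Q'$ that is independent of $(\frac{dQ_1}{dQ'},\dots,\frac{dQ_n}{dQ'})$ under $Q'$, then for $Q=\frac1n\sum_{i=1}^n Q_i$ the same $X$ is a continuously distributed random variable independent of $(\frac{dQ_1}{dQ},\dots,\frac{dQ_n}{dQ})$ under $Q$. -/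
open MeasureTheory ProbabilityTheory
open scoped ENNReal

/-!
With `Y = (dQᵢ/dQ')ᵢ`, the average `Q` has density `φ(Y)` with respect to `Q'`, where
`φ(y) = (1/n) ∑ⱼ yⱼ`. Reweighting `Q'` by a function of `Y` does not change the law of `X`
nor its independence from `Y`, since `Q(X ∈ A, Y ∈ B) = Q'(X ∈ A) Q(Y ∈ B)` by independence
under `Q'`. Finally `dQᵢ/dQ = Yᵢ / φ(Y)` holds `Q`-a.e., a function of `Y`.
-/

namespace ProbabilityTheory

variable {Ω α β : Type*} [MeasurableSpace Ω] [MeasurableSpace α] [MeasurableSpace β]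
  {μ : Measure Ω} {X : Ω → α} {Y : Ω → β} {f : β → ℝ≥0∞}

lemma IndepFun.withDensity_comp_inter_preimage (hind : IndepFun X Y μ) (hX : Measurable X)
    (hY : Measurable Y) (hf : Measurable f) {A : Set α} {B : Set β} (hA : MeasurableSet A)
    (hB : MeasurableSet B) :
    μ.withDensity (fun ω => f (Y ω)) (X ⁻¹' A ∩ Y ⁻¹' B) =
      μ (X ⁻¹' A) * μ.withDensity (fun ω => f (Y ω)) (Y ⁻¹' B) := by
  have h_split : (X ⁻¹' A ∩ Y ⁻¹' B).indicator (fun ω => f (Y ω)) =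
      (A.indicator 1 ∘ X) * (B.indicator f ∘ Y) := by
    ext ω
    by_cases hx : X ω ∈ A <;> by_cases hy : Y ω ∈ B <;> simp [Set.indicator, hx, hy]
  rw [withDensity_apply _ ((hX hA).inter (hY hB)), withDensity_apply _ (hY hB),
    ← lintegral_indicator ((hX hA).inter (hY hB)), h_split,
    lintegral_mul_eq_lintegral_mul_lintegral_of_indepFun
      ((measurable_one.indicator hA).comp hX) ((hf.indicator hB).comp hY)
      (hind.comp (measurable_one.indicator hA) (hf.indicator hB)),
    ← lintegral_indicator_one (hX hA), ← lintegral_indicator (hY hB)]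
  rfl

variable [IsProbabilityMeasure (μ.withDensity fun ω => f (Y ω))]

lemma IndepFun.withDensity_comp_preimage (hind : IndepFun X Y μ) (hX : Measurable X)
    (hY : Measurable Y) (hf : Measurable f) {A : Set α} (hA : MeasurableSet A) :
    μ.withDensity (fun ω => f (Y ω)) (X ⁻¹' A) = μ (X ⁻¹' A) := by
  simpa using hind.withDensity_comp_inter_preimage hX hY hf hA MeasurableSet.univ

lemma IndepFun.map_withDensity_comp (hind : IndepFun X Y μ) (hX : Measurable X)
    (hY : Measurable Y) (hf : Measurable f) :
    (μ.withDensity fun ω => f (Y ω)).map X = μ.map X := by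
  ext A hA
  rw [Measure.map_apply hX hA, Measure.map_apply hX hA,
    hind.withDensity_comp_preimage hX hY hf hA]

lemma IndepFun.withDensity_comp (hind : IndepFun X Y μ) (hX : Measurable X)
    (hY : Measurable Y) (hf : Measurable f) :
    IndepFun X Y (μ.withDensity fun ω => f (Y ω)) := by
  rw [indepFun_iff_measure_inter_preimage_eq_mul]
  intro A B hA hB
  rw [hind.withDensity_comp_inter_preimage hX hY hf hA hB,
    hind.withDensity_comp_preimage hX hY hf hA]

end ProbabilityTheory

namespace MeasureTheory.Measure

variable {Ω : Type*} [MeasurableSpace Ω]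

lemma rnDeriv_withDensity_eq_div {μ ρ : Measure Ω} [SigmaFinite μ] [SigmaFinite ρ]
    {g : Ω → ℝ≥0∞} [SigmaFinite (ρ.withDensity g)] (hg : Measurable g)
    (hg_top : ∀ᵐ ω ∂ρ, g ω ≠ ∞) (hμ : μ ≪ ρ.withDensity g) :
    μ.rnDeriv (ρ.withDensity g) =ᵐ[ρ.withDensity g] fun ω => μ.rnDeriv ρ ω / g ω := by
  have hac := withDensity_absolutelyContinuous ρ g
  have hg_pos : ∀ᵐ ω ∂ρ.withDensity g, g ω ≠ 0 :=
    (ae_withDensity_iff hg).2 (ae_of_all _ fun _ => id)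
  filter_upwards [hac.ae_le (rnDeriv_mul_rnDeriv hμ), hac.ae_le (rnDeriv_withDensity ρ hg),
    hac.ae_le hg_top, hg_pos] with ω h_chain h_dens h_top h_pos
  rw [ENNReal.eq_div_iff h_pos h_top, ← h_dens, mul_comm]
  exact h_chain

variable {ι : Type*}

lemma smul_sum_eq_withDensity (s : Finset ι) (c : ℝ≥0∞) (μ : ι → Measure Ω) (ν : Measure Ω)
    [∀ i, HaveLebesgueDecomposition (μ i) ν] (hμ : ∀ i ∈ s, μ i ≪ ν) :
    c • ∑ i ∈ s, μ i = ν.withDensity fun ω => c * ∑ i ∈ s, (μ i).rnDeriv ν ω := by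
  ext A hA
  rw [withDensity_apply _ hA, smul_apply, finsetSum_apply, smul_eq_mul,
    lintegral_const_mul _ (Finset.measurable_sum _ fun i _ => measurable_rnDeriv _ _),
    lintegral_finsetSum _ fun i _ => measurable_rnDeriv _ _]
  congr 1
  exact Finset.sum_congr rfl fun i hi => (setLIntegral_rnDeriv' (hμ i hi) hA).symm

lemma absolutelyContinuous_smul_sum {s : Finset ι} {i : ι} (hi : i ∈ s) {c : ℝ≥0∞}
    (hc : c ≠ 0) (μ : ι → Measure Ω) : μ i ≪ c • ∑ j ∈ s, μ j :=
  (absolutelyContinuous_of_le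
    (Finset.single_le_sum (fun j _ => Measure.zero_le (μ j)) hi)).smul_right hc

lemma isProbabilityMeasure_inv_card_smul_sum [Fintype ι] [Nonempty ι] (μ : ι → Measure Ω)
    [∀ i, IsProbabilityMeasure (μ i)] :
    IsProbabilityMeasure ((Fintype.card ι : ℝ≥0∞)⁻¹ • ∑ i, μ i) := by
  constructor
  simp only [smul_apply, finsetSum_apply, measure_univ, Finset.sum_const, Finset.card_univ,
    nsmul_eq_mul, mul_one, smul_eq_mul]
  exact ENNReal.inv_mul_cancel (by simp) (ENNReal.natCast_ne_top _)

end MeasureTheory.Measure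

/-- Proposition 3.12, (i) ⇒ (ii). If `(Q₁,…,Qₙ)` is conditionally atomless,
i.e. there is a dominating probability measure `Q'` and a random variable `X` with atomless
distribution under `Q'` that is independent of `(dQ₁/dQ',…,dQₙ/dQ')` under `Q'`, then for the
average `Q = (1/n)∑ᵢ Qᵢ` the same `X` has an atomless distribution under `Q` and is independent
of `(dQ₁/dQ,…,dQₙ/dQ)` under `Q`. -/
theorem conditionally_atomless_average
    {Ω : Type} [MeasurableSpace Ω] (n : ℕ) (hn : 0 < n)
    (Qi : Fin n → Measure Ω) [∀ i, IsProbabilityMeasure (Qi i)]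
    (Q' : Measure Ω) [IsProbabilityMeasure Q'] (hdom : ∀ i, Qi i ≪ Q')
    (X : Ω → ℝ) (hX : Measurable X)
    (hcont : ∀ x : ℝ, Q'.map X {x} = 0)
    (hind : IndepFun X (fun ω => fun i => ((Qi i).rnDeriv Q' ω).toReal) Q') :
    (∀ x : ℝ, (((n : ℝ≥0∞)⁻¹ • ∑ j, Qi j).map X) {x} = 0) ∧
      IndepFun X
        (fun ω => fun i => ((Qi i).rnDeriv ((n : ℝ≥0∞)⁻¹ • ∑ j, Qi j) ω).toReal)
        ((n : ℝ≥0∞)⁻¹ • ∑ j, Qi j) := by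
  set Y : Ω → Fin n → ℝ := fun ω i => ((Qi i).rnDeriv Q' ω).toReal
  set φ : (Fin n → ℝ) → ℝ≥0∞ := fun y => (n : ℝ≥0∞)⁻¹ * ∑ j, ENNReal.ofReal (y j)
  have hY : Measurable Y := by fun_prop
  have hφ : Measurable φ := by fun_prop
  have hφ_top : ∀ y, φ y ≠ ∞ := fun y => ENNReal.mul_ne_top (by simp [hn.ne'])
    (ENNReal.sum_ne_top.2 fun _ _ => ENNReal.ofReal_ne_top)
  have hQ : (n : ℝ≥0∞)⁻¹ • ∑ j, Qi j = Q'.withDensity fun ω => φ (Y ω) := by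
    rw [Measure.smul_sum_eq_withDensity _ _ _ _ fun i _ => hdom i]
    refine withDensity_congr_ae ?_
    filter_upwards [ae_all_iff.2 fun i => Measure.rnDeriv_ne_top (Qi i) Q'] with ω hω
    simp only [φ, Y, ENNReal.ofReal_toReal (hω _)]
  have hQ_prob : IsProbabilityMeasure ((n : ℝ≥0∞)⁻¹ • ∑ j, Qi j) := by
    have : Nonempty (Fin n) := ⟨⟨0, hn⟩⟩
    simpa using Measure.isProbabilityMeasure_inv_card_smul_sum Qi
  have hQi : ∀ i, Qi i ≪ Q'.withDensity fun ω => φ (Y ω) := fun i =>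
    hQ ▸ Measure.absolutelyContinuous_smul_sum (Finset.mem_univ i) (by simp) Qi
  rw [hQ] at hQ_prob ⊢
  refine ⟨fun x => hind.map_withDensity_comp hX hY hφ ▸ hcont x, ?_⟩
  have h_dens : Measurable fun y : Fin n → ℝ => fun i => y i / (φ y).toReal := by fun_prop
  refine ((hind.withDensity_comp hX hY hφ).comp measurable_id h_dens).congr .rfl ?_
  filter_upwards [ae_all_iff.2 fun i => Measure.rnDeriv_withDensity_eq_div (hφ.comp hY)
    (ae_of_all _ fun ω => hφ_top (Y ω)) (hQi i)] with ω hω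
  funext i
  simp [hω i, ENNReal.toReal_div, Y]
end

section
/- Let $P$ and $Q$ be equivalent atomless probability measures on $(\Omega,\mathcal A)$, let $q\in(0,1)$, let $H$ be the distribution function of $\frac{dP}{dQ}$ under $Q$, and let $U$ be a $[0,1]$-uniform random variable under $Q$ with $H^{-1}(U)=\frac{dP}{dQ}$ $Q$-a.s. Then $\max\{P(A): A\in\mathcal A,\ Q(A)=q\} = \int_{1-q}^1 H^{-1}(u)\,du$, and the maximum is attained by $A^*=\{U\ge 1-q\}$. -/
open MeasureTheory
open scoped ENNReal

/-- Generalized inverse (quantile function) of a Borel probability measure on `ℝ`. -/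
noncomputable def quantileFn (μ : Measure ℝ) (t : ℝ) : ℝ :=
  sInf {x : ℝ | ENNReal.ofReal t ≤ μ (Set.Iic x)}

/-- A measure is atomless: every set of positive measure contains a subset of strictly smaller
positive measure. -/
def AtomlessMeasure {Ω : Type} [MeasurableSpace Ω] (μ : Measure Ω) : Prop :=
  ∀ A : Set Ω, MeasurableSet A → 0 < μ A →
    ∃ B ⊆ A, MeasurableSet B ∧ 0 < μ B ∧ μ B < μ A

open ProbabilityTheory Set

/-!
Write `f = dP/dQ` and `g = H⁻¹`. Since `g` is monotone and `f = g ∘ U`, the set `B = {U ≥ 1 - q}`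
is a superlevel set of `f` at the threshold `c = g (1 - q)`: `f ≥ c` on `B` and `f ≤ c` off `B`.
For any `A` with `Q A = Q B` the pieces `A \ B` and `B \ A` have equal `Q`-measure, so
`P (A \ B) = ∫_{A \ B} f dQ ≤ c Q (A \ B) = c Q (B \ A) ≤ P (B \ A)`, hence `P A ≤ P B`.
The value `P B = ∫_{U ≥ 1 - q} g (U) dQ = ∫_{1-q}^1 g` is the change of variables along the
uniform law of `U`.
-/

theorem Set.Ici_inter_Icc_of_le {α : Type*} [LinearOrder α] {a b c : α} (hba : b ≤ a) :
    Ici a ∩ Icc b c = Icc a c := by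
  rw [← Ici_inter_Iic, ← inter_assoc, Ici_inter_Ici, max_eq_left hba, Ici_inter_Iic]

section Threshold

variable {Ω : Type*} [MeasurableSpace Ω] {μ : Measure Ω} [IsFiniteMeasure μ]

theorem setIntegral_le_setIntegral_of_threshold {f : Ω → ℝ} (hf : Integrable f μ)
    {A B : Set Ω} (hA : MeasurableSet A) (hB : MeasurableSet B) (hAB : μ A = μ B) {c : ℝ}
    (h_out : ∀ᵐ ω ∂μ, ω ∉ B → f ω ≤ c) (h_in : ∀ᵐ ω ∂μ, ω ∈ B → c ≤ f ω) :
    ∫ ω in A, f ω ∂μ ≤ ∫ ω in B, f ω ∂μ := by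
  have h_diff : μ.real (A \ B) = μ.real (B \ A) := by
    simp only [measureReal_def,
      measure_sdiff_symm hA.nullMeasurableSet hB.nullMeasurableSet hAB (measure_ne_top _ _)]
  have h_AB : ∫ ω in A \ B, f ω ∂μ ≤ ∫ _ in A \ B, c ∂μ :=
    setIntegral_mono_on_ae hf.integrableOn (integrableOn_const (measure_ne_top _ _))
      (hA.diff hB) (h_out.mono fun _ h hω => h hω.2)
  have h_BA : ∫ _ in B \ A, c ∂μ ≤ ∫ ω in B \ A, f ω ∂μ :=
    setIntegral_mono_on_ae (integrableOn_const (measure_ne_top _ _)) hf.integrableOn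
      (hB.diff hA) (h_in.mono fun _ h hω => h hω.1)
  calc ∫ ω in A, f ω ∂μ = ∫ ω in A ∩ B, f ω ∂μ + ∫ ω in A \ B, f ω ∂μ :=
        (integral_inter_add_sdiff hB hf.integrableOn).symm
    _ ≤ ∫ ω in B ∩ A, f ω ∂μ + ∫ _ in B \ A, c ∂μ := by
        rw [inter_comm, setIntegral_const c (s := B \ A), ← h_diff, ← setIntegral_const]
        gcongr
    _ ≤ ∫ ω in B ∩ A, f ω ∂μ + ∫ ω in B \ A, f ω ∂μ := by gcongr
    _ = ∫ ω in B, f ω ∂μ := integral_inter_add_sdiff hA hf.integrableOn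

end Threshold

section UniformLaw

variable {Ω : Type*} [MeasurableSpace Ω] {Q : Measure Ω} {U : Ω → ℝ}

theorem ae_mem_Ioo_of_map_eq_uniform (hU : AEMeasurable U Q)
    (hUlaw : Q.map U = volume.restrict (Icc 0 1)) : ∀ᵐ ω ∂Q, U ω ∈ Ioo 0 1 := by
  refine ae_of_ae_map hU ?_
  rw [hUlaw, ← Measure.restrict_congr_set Ioo_ae_eq_Icc]
  exact ae_restrict_mem measurableSet_Ioo

theorem measure_le_of_map_eq_uniform (hU : Measurable U)
    (hUlaw : Q.map U = volume.restrict (Icc 0 1)) {a : ℝ} (ha : 0 ≤ a) :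
    Q {ω | a ≤ U ω} = ENNReal.ofReal (1 - a) := by
  change Q (U ⁻¹' Ici a) = _
  rw [← Measure.map_apply hU measurableSet_Ici, hUlaw,
    Measure.restrict_apply measurableSet_Ici, Ici_inter_Icc_of_le ha, Real.volume_Icc]

theorem setIntegral_comp_of_map_eq_uniform (hU : Measurable U)
    (hUlaw : Q.map U = volume.restrict (Icc 0 1)) {g : ℝ → ℝ}
    (hg : AEStronglyMeasurable g (volume.restrict (Icc 0 1))) {a : ℝ} (ha : 0 ≤ a) :
    ∫ ω in {ω | a ≤ U ω}, g (U ω) ∂Q = ∫ u in Ioc a 1, g u := by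
  change ∫ ω in U ⁻¹' Ici a, g (U ω) ∂Q = _
  rw [← setIntegral_map measurableSet_Ici (hUlaw ▸ hg) hU.aemeasurable, hUlaw,
    Measure.restrict_restrict measurableSet_Ici, Ici_inter_Icc_of_le ha,
    setIntegral_congr_set Ioc_ae_eq_Icc]

end UniformLaw

section Quantile

variable (μ : Measure ℝ) [IsProbabilityMeasure μ]

theorem quantileFn_monotoneOn : MonotoneOn (quantileFn μ) (Ioo 0 1) := by
  intro s hs t ht hst
  have h_bdd : BddBelow {x : ℝ | ENNReal.ofReal s ≤ μ (Iic x)} := by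
    obtain ⟨x₀, hx₀⟩ := ((tendsto_cdf_atBot μ).eventually (gt_mem_nhds hs.1)).exists
    refine ⟨x₀, fun x (hx : ENNReal.ofReal s ≤ μ (Iic x)) => le_of_not_gt fun hlt => ?_⟩
    rw [← ofReal_cdf, ENNReal.ofReal_le_ofReal_iff (cdf_nonneg μ x)] at hx
    exact hx₀.not_ge (hx.trans (monotone_cdf μ hlt.le))
  have h_ne : {x : ℝ | ENNReal.ofReal t ≤ μ (Iic x)}.Nonempty := by
    have h_lt : ENNReal.ofReal t < μ univ := by
      rw [measure_univ]; exact ENNReal.ofReal_lt_one.mpr ht.2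
    obtain ⟨x, hx⟩ := ((tendsto_measure_Iic_atTop μ).eventually (eventually_gt_nhds h_lt)).exists
    exact ⟨x, hx.le⟩
  exact csInf_le_csInf h_bdd h_ne fun x hx => (ENNReal.ofReal_le_ofReal hst).trans hx

theorem aemeasurable_quantileFn : AEMeasurable (quantileFn μ) (volume.restrict (Icc 0 1)) := by
  rw [← Measure.restrict_congr_set Ioo_ae_eq_Icc]
  exact aemeasurable_restrict_of_monotoneOn measurableSet_Ioo (quantileFn_monotoneOn μ)

end Quantile

theorem setIntegral_le_setIntegral_of_ae_eq_monotoneOn_comp {Ω : Type*} [MeasurableSpace Ω]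
    {Q : Measure Ω} [IsFiniteMeasure Q] {U f : Ω → ℝ} {g : ℝ → ℝ} (hU : Measurable U)
    (hU01 : ∀ᵐ ω ∂Q, U ω ∈ Ioo 0 1) (hg : MonotoneOn g (Ioo 0 1))
    (hfg : ∀ᵐ ω ∂Q, g (U ω) = f ω) (hf : Integrable f Q) {a : ℝ} (ha : a ∈ Ioo 0 1)
    {A : Set Ω} (hA : MeasurableSet A) (hQA : Q A = Q {ω | a ≤ U ω}) :
    ∫ ω in A, f ω ∂Q ≤ ∫ ω in {ω | a ≤ U ω}, f ω ∂Q := by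
  refine setIntegral_le_setIntegral_of_threshold hf hA (hU measurableSet_Ici) hQA
    (c := g a) ?_ ?_
  · filter_upwards [hU01, hfg] with ω hω hfω hωB
    exact hfω ▸ hg hω ha (le_of_not_ge hωB)
  · filter_upwards [hU01, hfg] with ω hω hfω hωB
    exact hfω ▸ hg ha hω hωB

theorem neyman_pearson_general
    {Ω : Type} [MeasurableSpace Ω]
    (P Q : Measure Ω) [IsProbabilityMeasure P] [IsProbabilityMeasure Q]
    (hPQ : P ≪ Q)
    (q : ℝ) (hq : q ∈ Set.Ioo (0:ℝ) 1)
    (U : Ω → ℝ) (hU : Measurable U)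
    (hUlaw : Q.map U = volume.restrict (Set.Icc (0:ℝ) 1))
    (hUq : ∀ᵐ ω ∂Q,
      quantileFn (Q.map (fun ω' => (P.rnDeriv Q ω').toReal)) (U ω)
        = (P.rnDeriv Q ω).toReal) :
    Q {ω | 1 - q ≤ U ω} = ENNReal.ofReal q ∧
    (P {ω | 1 - q ≤ U ω}).toReal
      = ∫ u in Set.Ioc (1 - q) 1,
          quantileFn (Q.map (fun ω' => (P.rnDeriv Q ω').toReal)) u ∧
    ∀ A : Set Ω, MeasurableSet A → Q A = ENNReal.ofReal q →
      P A ≤ P {ω | 1 - q ≤ U ω} := by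
  obtain ⟨hq0, hq1⟩ := hq
  have hf : Measurable fun ω => (P.rnDeriv Q ω).toReal :=
    (Measure.measurable_rnDeriv P Q).ennreal_toReal
  have := Measure.isProbabilityMeasure_map (μ := Q) hf.aemeasurable
  have hP : ∀ s, (P s).toReal = ∫ ω in s, (P.rnDeriv Q ω).toReal ∂Q :=
    fun s => (Measure.setIntegral_toReal_rnDeriv hPQ s).symm
  have hQB : Q {ω | 1 - q ≤ U ω} = ENNReal.ofReal q := by
    rw [measure_le_of_map_eq_uniform hU hUlaw (by linarith), sub_sub_cancel]
  refine ⟨hQB, ?_, fun A hA hQA => ?_⟩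
  · rw [hP, ← setIntegral_comp_of_map_eq_uniform hU hUlaw
      (aemeasurable_quantileFn _).aestronglyMeasurable (by linarith)]
    exact setIntegral_congr_ae (hU measurableSet_Ici) (hUq.mono fun _ h _ => h.symm)
  · rw [← ENNReal.toReal_le_toReal (measure_ne_top _ _) (measure_ne_top _ _), hP, hP]
    exact setIntegral_le_setIntegral_of_ae_eq_monotoneOn_comp hU
      (ae_mem_Ioo_of_map_eq_uniform hU.aemeasurable hUlaw) (quantileFn_monotoneOn _) hUq
      Measure.integrable_toReal_rnDeriv ⟨by linarith, by linarith⟩ hA (hQA.trans hQB.symm)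

/-- Example 5.6, Neyman–Pearson. Let `P, Q` be equivalent atomless
probability measures, `q ∈ (0,1)`, `H` the distribution of `dP/dQ` under `Q`, and `U` a
`[0,1]`-uniform random variable under `Q` with `H⁻¹(U) = dP/dQ` `Q`-a.s. Then the maximum of
`P(A)` over measurable `A` with `Q(A) = q` equals `∫_{1-q}^1 H⁻¹(u) du` and is attained at
`A* = {U ≥ 1-q}`. -/
theorem neyman_pearson
    {Ω : Type} [MeasurableSpace Ω]
    (P Q : Measure Ω) [IsProbabilityMeasure P] [IsProbabilityMeasure Q]
    (hPQ : P ≪ Q) (hQP : Q ≪ P)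
    (hPat : AtomlessMeasure P) (hQat : AtomlessMeasure Q)
    (q : ℝ) (hq : q ∈ Set.Ioo (0:ℝ) 1)
    (U : Ω → ℝ) (hU : Measurable U)
    (hUlaw : Q.map U = volume.restrict (Set.Icc (0:ℝ) 1))
    (hUq : ∀ᵐ ω ∂Q,
      quantileFn (Q.map (fun ω' => (P.rnDeriv Q ω').toReal)) (U ω)
        = (P.rnDeriv Q ω).toReal) :
    Q {ω | 1 - q ≤ U ω} = ENNReal.ofReal q ∧
    (P {ω | 1 - q ≤ U ω}).toReal
      = ∫ u in Set.Ioc (1 - q) 1,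
          quantileFn (Q.map (fun ω' => (P.rnDeriv Q ω').toReal)) u ∧
    ∀ A : Set Ω, MeasurableSet A → Q A = ENNReal.ofReal q →
      P A ≤ P {ω | 1 - q ≤ U ω} :=
  neyman_pearson_general P Q hPQ q hq U hU hUlaw hUq
end
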